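/- arXiv:1903.04273 — 2 statements merged into one kernel-verified Lean document; each statement's English description precedes it below -/
import Mathlib

section
/- Let W₁, W₂ ⊆ P(ℕ) be classes downward closed under Turing reducibility. Suppose that every problem admitting preservation of W₁ admits preservation of W₂. Then every problem admitting strong preservation of W₁ admits strong preservation of W₂. -/
open Classical in
/-- The characteristic function of a set of naturals. -/
noncomputable def chi (A : Set ℕ) : ℕ → ℕ := fun n => if n ∈ A then 1 else 0

/-- The effective join (Turing join) of two sets of naturals:
`X ⊕ Y = {2n : n ∈ X} ∪ {2n+1 : n ∈ Y}`. -/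
def setJoin (A B : Set ℕ) : Set ℕ :=
  {n | (∃ m ∈ A, n = 2 * m) ∨ (∃ m ∈ B, n = 2 * m + 1)}

/-- The graph of a function `f : ℕ → ℕ`, coded as a set of naturals. -/
def funGraph (f : ℕ → ℕ) : Set ℕ := {m | ∃ n, m = Nat.pair n (f n)}

/-- Partial recursiveness relative to an oracle `g : ℕ → ℕ` (oracle computability). -/
inductive OracleRecursiveIn (g : ℕ → ℕ) : (ℕ →. ℕ) → Prop
  | zero : OracleRecursiveIn g (pure 0)
  | succ : OracleRecursiveIn g Nat.succ
  | left : OracleRecursiveIn g fun n => (Nat.unpair n).1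
  | right : OracleRecursiveIn g fun n => (Nat.unpair n).2
  | oracle : OracleRecursiveIn g g
  | pair {f h : ℕ →. ℕ} : OracleRecursiveIn g f → OracleRecursiveIn g h →
      OracleRecursiveIn g fun n => Nat.pair <$> f n <*> h n
  | comp {f h : ℕ →. ℕ} : OracleRecursiveIn g f → OracleRecursiveIn g h →
      OracleRecursiveIn g fun n => h n >>= f
  | prec {f h : ℕ →. ℕ} : OracleRecursiveIn g f → OracleRecursiveIn g h →
      OracleRecursiveIn g (Nat.unpaired fun a n =>
        n.rec (f a) fun y IH => do {let i ← IH; h (Nat.pair a (Nat.pair y i))})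
  | rfind {f : ℕ →. ℕ} : OracleRecursiveIn g f →
      OracleRecursiveIn g fun a => Nat.rfind fun n => (fun m => m = 0) <$> f (Nat.pair a n)

/-- Turing reducibility between sets of naturals. -/
noncomputable def TuringRed (A B : Set ℕ) : Prop := OracleRecursiveIn (chi B) (chi A)

/-- `A` is `Σ⁰₁(Z)` (i.e. `Z`-c.e.): `A` is the domain of a partial `Z`-computable function. -/
noncomputable def SigmaOneIn (Z A : Set ℕ) : Prop :=
  ∃ f : ℕ →. ℕ, OracleRecursiveIn (chi Z) f ∧ A = f.Dom

/-- `g` dominates `f` if `g n ≥ f n` for every `n`. -/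
def Dominates (g f : ℕ → ℕ) : Prop := ∀ n, f n ≤ g n

/-- `f` is `Z`-hyperimmune: no `Z`-computable function dominates `f`. -/
noncomputable def HyperimmuneIn (Z : Set ℕ) (f : ℕ → ℕ) : Prop :=
  ∀ g : ℕ → ℕ, OracleRecursiveIn (chi Z) g → ¬ Dominates g f

/-- `A` is `Δ⁰₂(G)`: `A` is limit computable relative to `G`. -/
noncomputable def DeltaTwoIn (G A : Set ℕ) : Prop :=
  ∃ h : ℕ → ℕ, OracleRecursiveIn (chi G) h ∧ ∀ x, ∃ s₀, ∀ s ≥ s₀, h (Nat.pair x s) = chi A x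

/-- `A` is c.e. (`Σ⁰₁`). -/
noncomputable def CESet (A : Set ℕ) : Prop := SigmaOneIn ∅ A

/-- `A` is `Δ⁰₂` (limit computable). -/
noncomputable def DeltaTwo (A : Set ℕ) : Prop := DeltaTwoIn ∅ A

/-- `A` is `Z`-immune: `A` is infinite and contains no infinite `Z`-computable subset. -/
noncomputable def ImmuneIn (Z A : Set ℕ) : Prop :=
  A.Infinite ∧ ∀ B : Set ℕ, TuringRed B Z → B.Infinite → ¬ B ⊆ A

/-- `A` is `Z`-hyperimmune as a set: its principal function is `Z`-hyperimmune. -/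
noncomputable def HyperimmuneSetIn (Z A : Set ℕ) : Prop :=
  A.Infinite ∧ HyperimmuneIn Z (Nat.nth (· ∈ A))

/-- Enumeration reducibility, with finite sets coded by binary representation
(`m ∈ D_u ↔ Nat.testBit u m`). -/
noncomputable def EnumRed (B A : Set ℕ) : Prop :=
  ∃ W : Set ℕ, CESet W ∧
    ∀ n, n ∈ B ↔ ∃ u, Nat.pair n u ∈ W ∧ ∀ m, Nat.testBit u m = true → m ∈ A

/-- `B` is cototal: `B ≤ₑ ℕ \ B`. -/
noncomputable def Cototal (B : Set ℕ) : Prop := EnumRed B Bᶜ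

/-- `X` is semi-computable: there is a computable selector function. -/
noncomputable def SemiComputable (X : Set ℕ) : Prop :=
  ∃ g : ℕ → ℕ, OracleRecursiveIn (chi ∅) g ∧
    ∀ x y : ℕ, (g (Nat.pair x y) = x ∨ g (Nat.pair x y) = y) ∧
      ((x ∈ X ∨ y ∈ X) → g (Nat.pair x y) ∈ X)

/-- A problem: a set of instances, and a solution relation between instances and solutions.
Instances and solutions are coded by sets of naturals. -/
structure Problem where
  Inst : Set (Set ℕ)
  Sol : Set ℕ → Set ℕ → Prop

/-- `P` admits preservation of `W`. -/
noncomputable def Preserves (P : Problem) (W : Set (Set ℕ)) : Prop :=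
  ∀ Z ∈ W, ∀ X ∈ P.Inst, TuringRed X Z → ∃ Y, P.Sol X Y ∧ setJoin Z Y ∈ W

/-- `P` admits strong preservation of `W`. -/
noncomputable def StronglyPreserves (P : Problem) (W : Set (Set ℕ)) : Prop :=
  ∀ Z ∈ W, ∀ X ∈ P.Inst, ∃ Y, P.Sol X Y ∧ setJoin Z Y ∈ W

/-- `W` is downward closed under Turing reducibility. -/
noncomputable def DownwardClosed (W : Set (Set ℕ)) : Prop :=
  ∀ X ∈ W, ∀ Y : Set ℕ, TuringRed Y X → Y ∈ W

/-- A Turing ideal: closed under effective join and downward closed under `≤_T`. -/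
noncomputable def TuringIdeal (S : Set (Set ℕ)) : Prop :=
  (∀ X ∈ S, ∀ Y ∈ S, setJoin X Y ∈ S) ∧ DownwardClosed S

/-- `P` holds in `S`: every instance of `P` in `S` has a solution in `S`. -/
def HoldsIn (P : Problem) (S : Set (Set ℕ)) : Prop :=
  ∀ X ∈ P.Inst, X ∈ S → ∃ Y, P.Sol X Y ∧ Y ∈ S

/-- `P` admits avoidance of `k` cones (`k ≤ ω`, with `ω` represented by `⊤ : ℕ∞`). -/
noncomputable def AvoidsCones (P : Problem) (k : ℕ∞) : Prop :=
  ∀ Z : Set ℕ, ∀ B : ℕ → Set ℕ, (∀ s : ℕ, (s : ℕ∞) < k → ¬ TuringRed (B s) Z) →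
    ∀ X ∈ P.Inst, TuringRed X Z →
      ∃ Y, P.Sol X Y ∧ ∀ s : ℕ, (s : ℕ∞) < k → ¬ TuringRed (B s) (setJoin Z Y)

/-- `P` admits non-relativized avoidance of `k` cones. -/
noncomputable def NRAvoidsCones (P : Problem) (k : ℕ∞) : Prop :=
  ∀ B : ℕ → Set ℕ, (∀ s : ℕ, (s : ℕ∞) < k → ¬ TuringRed (B s) ∅) →
    ∀ X ∈ P.Inst, TuringRed X ∅ →
      ∃ Y, P.Sol X Y ∧ ∀ s : ℕ, (s : ℕ∞) < k → ¬ TuringRed (B s) Y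

/-- `P` admits preservation of `k` non-`Σ⁰₁` definitions. -/
noncomputable def PreservesNonSigmaOne (P : Problem) (k : ℕ∞) : Prop :=
  ∀ Z : Set ℕ, ∀ B : ℕ → Set ℕ, (∀ s : ℕ, (s : ℕ∞) < k → ¬ SigmaOneIn Z (B s)) →
    ∀ X ∈ P.Inst, TuringRed X Z →
      ∃ Y, P.Sol X Y ∧ ∀ s : ℕ, (s : ℕ∞) < k → ¬ SigmaOneIn (setJoin Z Y) (B s)

/-- `P` admits preservation of `k` hyperimmunities. -/
noncomputable def PreservesHyperimmunities (P : Problem) (k : ℕ∞) : Prop :=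
  ∀ Z : Set ℕ, ∀ f : ℕ → (ℕ → ℕ), (∀ s : ℕ, (s : ℕ∞) < k → HyperimmuneIn Z (f s)) →
    ∀ X ∈ P.Inst, TuringRed X Z →
      ∃ Y, P.Sol X Y ∧ ∀ s : ℕ, (s : ℕ∞) < k → HyperimmuneIn (setJoin Z Y) (f s)

/-- `P` admits preservation of `k` immunities. -/
noncomputable def PreservesImmunities (P : Problem) (k : ℕ∞) : Prop :=
  ∀ Z : Set ℕ, ∀ B : ℕ → Set ℕ, (∀ s : ℕ, (s : ℕ∞) < k → ImmuneIn Z (B s)) →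
    ∀ X ∈ P.Inst, TuringRed X Z →
      ∃ Y, P.Sol X Y ∧ ∀ s : ℕ, (s : ℕ∞) < k → ImmuneIn (setJoin Z Y) (B s)

/-- Coding a point of Cantor space as a function `ℕ → ℕ`. -/
def boolFun (X : ℕ → Bool) : ℕ → ℕ := fun n => cond (X n) 1 0

/-- `F` is a trace of the closed set `C ⊆ 2^ω`: each `F n` is a set of binary strings of
length `n`, one of which is a prefix of a member of `C`. -/
def IsTrace (C : Set (ℕ → Bool)) (F : ℕ → Finset (List Bool)) : Prop :=
  ∀ n, (∀ σ ∈ F n, σ.length = n) ∧ ∃ σ ∈ F n, ∃ X ∈ C, σ = (List.range n).map X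

/-- `C ⊆ 2^ω` has a `Z`-computable constant-bound trace. -/
noncomputable def HasCBTraceIn (Z : Set ℕ) (C : Set (ℕ → Bool)) : Prop :=
  ∃ (F : ℕ → Finset (List Bool)) (k : ℕ), IsTrace C F ∧ (∀ n, (F n).card = k) ∧
    OracleRecursiveIn (chi Z) (fun n => Encodable.encode (F n) : ℕ → ℕ)

open Classical in
/-- The real `0.B` with binary expansion given by `B`. -/
noncomputable def realOf (B : Set ℕ) : ℝ :=
  ∑' n : ℕ, if n ∈ B then ((2 : ℝ) ^ (n + 1))⁻¹ else 0

/-- A c.e. set of rationals: the image of a c.e. set of naturals under the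
canonical enumeration of `ℚ`. -/
noncomputable def CERatSet (W : Set ℚ) : Prop :=
  ∃ S : Set ℕ, CESet S ∧ W = (fun n => Denumerable.ofNat ℚ n) '' S


/-- The problem whose only instance is the computable set `∅`, with the solutions of the
instance `X` of `P`: strong preservation for `P` reduces to plain preservation for these. -/
def Problem.fixInstance (P : Problem) (X : Set ℕ) : Problem := ⟨{∅}, fun _ Y => P.Sol X Y⟩

theorem chi_empty : (chi ∅ : ℕ →. ℕ) = pure 0 := by
  funext n
  simp only [PFun.coe_val, chi, Set.mem_empty_iff_false, ↓reduceIte]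
  rfl

theorem turingRed_empty (Z : Set ℕ) : TuringRed ∅ Z := by
  rw [TuringRed, chi_empty]
  exact OracleRecursiveIn.zero

theorem StronglyPreserves.preserves_fixInstance {P : Problem} {W : Set (Set ℕ)}
    (hP : StronglyPreserves P W) {X : Set ℕ} (hX : X ∈ P.Inst) :
    Preserves (P.fixInstance X) W :=
  fun Z hZ _ _ _ => hP Z hZ X hX

theorem Preserves.exists_sol_of_fixInstance {P : Problem} {W : Set (Set ℕ)} {X : Set ℕ}
    (hP : Preserves (P.fixInstance X) W) {Z : Set ℕ} (hZ : Z ∈ W) :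
    ∃ Y, P.Sol X Y ∧ setJoin Z Y ∈ W :=
  hP Z hZ ∅ rfl (turingRed_empty Z)

theorem stmt1_general (W₁ W₂ : Set (Set ℕ))
    (h : ∀ P : Problem, Preserves P W₁ → Preserves P W₂) :
    ∀ P : Problem, StronglyPreserves P W₁ → StronglyPreserves P W₂ :=
  fun _ hP _ hZ _ hX =>
    (h _ (hP.preserves_fixInstance hX)).exists_sol_of_fixInstance hZ

/-- If preservation of `W₁` implies preservation of `W₂` (for all problems),
then strong preservation of `W₁` implies strong preservation of `W₂`. -/
theorem stmt1 (W₁ W₂ : Set (Set ℕ)) (hW₁ : DownwardClosed W₁) (hW₂ : DownwardClosed W₂)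
    (h : ∀ P : Problem, Preserves P W₁ → Preserves P W₂) :
    ∀ P : Problem, StronglyPreserves P W₁ → StronglyPreserves P W₂ :=
  stmt1_general W₁ W₂ h
end

section
/- Let A ⊆ ℕ be a semi-computable set. Then A is immune if and only if A is hyperimmune (as a set); moreover, if A is immune then A is not c.e. -/
/-! If a computable `g` dominates the principal function of `A`, every interval
`[p + 1, g (p + 1)]` meets `A`, so folding the selector over it effectively finds a point of `A`
above `p`. Iterating gives a computable increasing sequence in `A`, whose range is an infinite
computable subset of `A`. An infinite c.e. set contains such a sequence too (search for the first
enumerated element above `p`). Conversely, an increasing enumeration of an infinite computable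
`B ⊆ A` dominates the principal function of `A`. -/

theorem oracleRecursiveIn_chi_empty_iff {f : ℕ →. ℕ} :
    OracleRecursiveIn (chi ∅) f ↔ Nat.Partrec f := by
  have chi_empty : ((chi ∅ : ℕ → ℕ) : ℕ →. ℕ) = pure 0 := by
    funext n
    simp [chi]
    rfl
  constructor
  · intro h
    induction h with
    | zero => exact .zero
    | succ => exact .succ
    | left => exact .left
    | right => exact .right
    | oracle => exact chi_empty ▸ .zero
    | pair _ _ ih₁ ih₂ => exact ih₁.pair ih₂
    | comp _ _ ih₁ ih₂ => exact ih₁.comp ih₂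
    | prec _ _ ih₁ ih₂ => exact ih₁.prec ih₂
    | rfind _ ih => exact ih.rfind
  · intro h
    induction h with
    | zero => exact .zero
    | succ => exact .succ
    | left => exact .left
    | right => exact .right
    | pair _ _ ih₁ ih₂ => exact .pair ih₁ ih₂
    | comp _ _ ih₁ ih₂ => exact .comp ih₁ ih₂
    | prec _ _ ih₁ ih₂ => exact .prec ih₁ ih₂
    | rfind _ ih => exact .rfind ih

theorem oracleRecursiveIn_chi_empty_iff_computable {f : ℕ → ℕ} :
    OracleRecursiveIn (chi ∅) f ↔ Computable f :=
  oracleRecursiveIn_chi_empty_iff.trans Partrec.nat_iff.symm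

theorem turingRed_empty_iff {B : Set ℕ} : TuringRed B ∅ ↔ ComputablePred (· ∈ B) := by
  classical
  have chi_eq : chi B = fun n => cond (decide (n ∈ B)) 1 0 := by
    funext n
    by_cases h : n ∈ B <;> simp [chi, h]
  rw [TuringRed, oracleRecursiveIn_chi_empty_iff_computable, computablePred_iff_computable_decide,
    chi_eq]
  constructor
  · intro h
    exact (Primrec.eq.decide.to_comp.comp h (Computable.const 1)).of_eq fun n => by
      cases decide (n ∈ B) <;> rfl
  · intro h
    exact h.cond (Computable.const 1) (Computable.const 0)

open Nat.Partrec Code in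
theorem CESet.exists_computablePred {A : Set ℕ} (hA : CESet A) :
    ∃ P : ℕ → ℕ → Prop,
      ComputablePred (fun q : ℕ × ℕ => P q.1 q.2) ∧ ∀ x, x ∈ A ↔ ∃ k, P x k := by
  obtain ⟨f, hf, rfl⟩ := hA
  obtain ⟨c, rfl⟩ := exists_code.1 (oracleRecursiveIn_chi_empty_iff.1 hf)
  refine ⟨fun x k => (evaln k c x).isSome, ?_, fun x => ?_⟩
  · exact Computable.computablePred <| (Primrec.option_isSome.comp <| primrec_evaln.comp <|
      (Primrec.snd.pair (Primrec.const c)).pair Primrec.fst).to_comp.of_eq fun _ => by simp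
  · simp only [PFun.mem_dom, Option.isSome_iff_exists]
    constructor
    · rintro ⟨y, hy⟩
      obtain ⟨k, hk⟩ := evaln_complete.1 hy
      exact ⟨k, y, hk⟩
    · rintro ⟨k, y, hk⟩
      exact ⟨y, evaln_sound hk⟩

theorem exists_computable_strictMono_of_step {A : Set ℕ} {step : ℕ → ℕ}
    (hstep : Computable step) (h : ∀ p, p < step p ∧ step p ∈ A) :
    ∃ a : ℕ → ℕ, Computable a ∧ StrictMono a ∧ ∀ n, a n ∈ A := by
  let orbit : ℕ → ℕ := fun n => Nat.rec 0 (fun _ p => step p) n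
  have horbit : Computable orbit :=
    Computable.nat_rec .id (.const 0) (hstep.comp (Computable.snd.comp Computable.snd)).to₂
  exact ⟨fun n => step (orbit n), hstep.comp horbit,
    strictMono_nat_of_lt_succ fun n => (h _).1, fun n => (h _).2⟩

theorem Set.Infinite.exists_computable_strictMono {A : Set ℕ} (hinf : A.Infinite)
    {P : ℕ → ℕ → Prop} (hP : ComputablePred fun q : ℕ × ℕ => P q.1 q.2)
    (hA : ∀ x, x ∈ A ↔ ∃ k, P x k) :
    ∃ a : ℕ → ℕ, Computable a ∧ StrictMono a ∧ ∀ n, a n ∈ A := by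
  classical
  have hex : ∀ p, ∃ m : ℕ, p < m.unpair.1 ∧ P m.unpair.1 m.unpair.2 := by
    intro p
    obtain ⟨x, hxA, hpx⟩ := hinf.exists_gt p
    obtain ⟨k, hk⟩ := (hA x).1 hxA
    exact ⟨Nat.pair x k, by simpa using ⟨hpx, hk⟩⟩
  have hsearch : ComputablePred fun q : ℕ × ℕ =>
      q.1 < q.2.unpair.1 ∧ P q.2.unpair.1 q.2.unpair.2 := by
    have hunpair : Computable fun q : ℕ × ℕ => q.2.unpair := Primrec.unpair.to_comp.comp .snd
    have hlt : Computable fun q : ℕ × ℕ => decide (q.1 < q.2.unpair.1) :=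
      Primrec.nat_lt.decide.to_comp.comp .fst (Computable.fst.comp hunpair)
    exact Computable.computablePred <|
      (Primrec.and.to_comp.comp hlt (hP.decide.comp hunpair)).of_eq fun q => by simp
  refine exists_computable_strictMono_of_step (step := fun p => (Nat.find (hex p)).unpair.1)
    ((Primrec.fst.comp Primrec.unpair).to_comp.comp (Computable.find hsearch hex)) fun p => ?_
  obtain ⟨hlt, hPp⟩ := Nat.find_spec (hex p)
  exact ⟨hlt, (hA _).2 ⟨_, hPp⟩⟩

theorem StrictMono.computablePred_mem_range {a : ℕ → ℕ} (ha : Computable a)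
    (hmono : StrictMono a) : ComputablePred (· ∈ Set.range a) := by
  classical
  have hex : ∀ x, ∃ k, x ≤ a k := fun x => ⟨x, hmono.le_apply⟩
  have hfind : Computable fun x => Nat.find (hex x) :=
    Computable.find (P := fun x k => x ≤ a k) (Computable.computablePred <|
      Primrec.nat_le.decide.to_comp.comp .fst (ha.comp .snd)) hex
  -- `x` is in the range iff the first `k` with `x ≤ a k` hits it exactly
  refine (Computable.computablePred (p := fun x => a (Nat.find (hex x)) = x) <|
    Primrec.eq.decide.to_comp.comp (ha.comp hfind) .id).of_eq fun x => ⟨fun h => ⟨_, h⟩, ?_⟩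
  rintro ⟨k, rfl⟩
  have hle : Nat.find (hex (a k)) ≤ k := Nat.find_min' _ le_rfl
  have hge : k ≤ Nat.find (hex (a k)) := hmono.le_iff_le.1 (Nat.find_spec (hex (a k)))
  rw [le_antisymm hle hge]

theorem not_immuneIn_empty_of_strictMono {A : Set ℕ} {a : ℕ → ℕ} (ha : Computable a)
    (hmono : StrictMono a) (hmem : ∀ n, a n ∈ A) : ¬ ImmuneIn ∅ A := fun himm =>
  himm.2 (Set.range a) (turingRed_empty_iff.2 (hmono.computablePred_mem_range ha))
    (Set.infinite_range_of_injective hmono.injective) (Set.range_subset_iff.2 hmem)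

theorem ImmuneIn.not_ceSet {A : Set ℕ} (himm : ImmuneIn ∅ A) : ¬ CESet A := fun hce =>
  let ⟨_, hP, hA⟩ := hce.exists_computablePred
  let ⟨_, ha, hmono, hmem⟩ := himm.1.exists_computable_strictMono hP hA
  not_immuneIn_empty_of_strictMono ha hmono hmem himm

theorem HyperimmuneSetIn.immuneIn {A : Set ℕ} (hhyp : HyperimmuneSetIn ∅ A) :
    ImmuneIn ∅ A := by
  classical
  refine ⟨hhyp.1, fun B hB hBinf hBA => ?_⟩
  have hBc : ComputablePred fun q : ℕ × ℕ => q.1 ∈ B :=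
    Computable.computablePred ((turingRed_empty_iff.1 hB).decide.comp .fst)
  obtain ⟨a, ha, hmono, hmem⟩ :=
    hBinf.exists_computable_strictMono hBc fun x => ⟨fun h => ⟨0, h⟩, fun ⟨_, h⟩ => h⟩
  exact hhyp.2 a (oracleRecursiveIn_chi_empty_iff_computable.2 ha) fun n =>
    Nat.nth_le_of_strictMonoOn_of_mapsTo a (fun n _ => hBA (hmem n)) (hmono.strictMonoOn _)

def selectIcc (s : ℕ → ℕ → ℕ) (lo : ℕ) : ℕ → ℕ
  | 0 => lo
  | k + 1 => s (lo + k + 1) (selectIcc s lo k)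

section Selector

variable {A : Set ℕ} {s : ℕ → ℕ → ℕ}

theorem Computable₂.selectIcc (hs : Computable₂ s) : Computable₂ (selectIcc s) := by
  have hstep : Computable₂ fun (q : ℕ × ℕ) (r : ℕ × ℕ) => s (q.1 + r.1 + 1) r.2 :=
    hs.comp (Primrec.succ.to_comp.comp
      (Primrec.nat_add.to_comp.comp (Computable.fst.comp .fst) (Computable.fst.comp .snd)))
      (Computable.snd.comp .snd)
  refine (Computable.nat_rec .snd .fst hstep).of_eq fun ⟨lo, k⟩ => ?_
  induction k with
  | zero => rfl
  | succ k ih => exact congrArg (s (lo + k + 1)) ih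

theorem selectIcc_mem_Icc (hs : ∀ x y, s x y = x ∨ s x y = y) (lo k : ℕ) :
    selectIcc s lo k ∈ Set.Icc lo (lo + k) := by
  induction k with
  | zero => simp [selectIcc]
  | succ k ih =>
    rcases hs (lo + k + 1) (selectIcc s lo k) with h | h <;>
      simp only [selectIcc, h, Set.mem_Icc] at ih ⊢ <;> omega

theorem selectIcc_mem (hs : ∀ x y, x ∈ A ∨ y ∈ A → s x y ∈ A) {lo k x : ℕ}
    (hx : x ∈ Set.Icc lo (lo + k)) (hxA : x ∈ A) : selectIcc s lo k ∈ A := by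
  induction k with
  | zero =>
    obtain rfl : x = lo := by simp at hx; omega
    exact hxA
  | succ k ih =>
    by_cases hk : x = lo + k + 1
    · exact hs _ _ (.inl (hk ▸ hxA))
    · exact hs _ _ (.inr (ih ⟨hx.1, by have := hx.2; omega⟩))

theorem Set.Infinite.exists_computable_strictMono_of_dominates (hinf : A.Infinite)
    (hs : Computable₂ s) (hsel : ∀ x y, s x y = x ∨ s x y = y)
    (hsA : ∀ x y, x ∈ A ∨ y ∈ A → s x y ∈ A) {g : ℕ → ℕ} (hg : Computable g)
    (hdom : Dominates g (Nat.nth (· ∈ A))) :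
    ∃ a : ℕ → ℕ, Computable a ∧ StrictMono a ∧ ∀ n, a n ∈ A := by
  refine exists_computable_strictMono_of_step
    (step := fun p => selectIcc s (p + 1) (g (p + 1) - (p + 1)))
    (hs.selectIcc.comp .succ (Primrec.nat_sub.to_comp.comp (hg.comp .succ) .succ)) fun p => ?_
  have hnth : p + 1 ≤ Nat.nth (· ∈ A) (p + 1) := (Nat.nth_strictMono hinf).le_apply
  have hIcc := selectIcc_mem_Icc hsel (p + 1) (g (p + 1) - (p + 1))
  have hdom' := hdom (p + 1)
  have hmem : Nat.nth (· ∈ A) (p + 1) ∈ A := Nat.nth_mem_of_infinite hinf _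
  exact ⟨by simp only [Set.mem_Icc] at hIcc; omega, selectIcc_mem hsA ⟨hnth, by omega⟩ hmem⟩

theorem SemiComputable.hyperimmuneSetIn_of_immuneIn (hA : SemiComputable A)
    (himm : ImmuneIn ∅ A) : HyperimmuneSetIn ∅ A := by
  obtain ⟨sel, hsel, hselA⟩ := hA
  refine ⟨himm.1, fun g hg hdom => ?_⟩
  obtain ⟨a, ha, hmono, hmem⟩ := himm.1.exists_computable_strictMono_of_dominates
    ((oracleRecursiveIn_chi_empty_iff_computable.1 hsel).comp₂ Primrec₂.natPair.to_comp)
    (fun x y => (hselA x y).1) (fun x y => (hselA x y).2)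
    (oracleRecursiveIn_chi_empty_iff_computable.1 hg) hdom
  exact not_immuneIn_empty_of_strictMono ha hmono hmem himm

end Selector

/-- A semi-computable set is immune iff it is hyperimmune;
moreover if it is immune then it is not c.e. -/
theorem stmt13 (A : Set ℕ) (hA : SemiComputable A) :
    (ImmuneIn ∅ A ↔ HyperimmuneSetIn ∅ A) ∧ (ImmuneIn ∅ A → ¬ CESet A) :=
  ⟨⟨hA.hyperimmuneSetIn_of_immuneIn, HyperimmuneSetIn.immuneIn⟩, ImmuneIn.not_ceSet⟩
end
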